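/- Under the gluing hypotheses (1)–(3), let M^w be a bounded operator on U^w for each w ∈ W, set M = Σ_w L^w M^w R^w, and let Q (resp. Q^w) denote the compression P₁MP₁ restricted to U₁ (resp. P^w₁M^wP^w₁ restricted to U^w₁). If z ∈ ℂ is such that Q^w − z is invertible on U^w₁ for every w ∈ W, then Q − z is invertible on U₁ and its inverse is the restriction to U₁ of Σ_w L^w ∘ P^w₁ ∘ (Q^w − z)⁻¹ ∘ P^w₁ ∘ R^w. -/

import Mathlib

/-!
Write `glue Y = Σ_w L^w ∘ Y^w ∘ R^w` for a family of operators `Y^w` on the `U^w`.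
Hypothesis (1) moves `P₁` through the gluing maps, so `P₁ ∘ glue Y ∘ P₁ = glue (P^w₁ Y^w P^w₁)`,
and (3) says `P₁ = glue P^w₁`; hence `Q − z = glue (Q^w − z)`. Hypothesis (2) makes gluing
multiplicative across `P₁`: `glue Y ∘ P₁ ∘ glue X = glue (Y^w P^w₁ X^w)`. Since `T = glue B^w`
absorbs `P₁` on either side, `(Q − z) ∘ T` and `T ∘ (Q − z)` are both `glue P^w₁ = P₁`.
-/

open ContinuousLinearMap

namespace ContinuousLinearMap

variable {𝕜 E : Type*} {W : Type*} [Fintype W] {F : W → Type*} [NormedField 𝕜]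
  [NormedAddCommGroup E] [NormedSpace 𝕜 E]
  [∀ w, NormedAddCommGroup (F w)] [∀ w, NormedSpace 𝕜 (F w)]

def glue (L : ∀ w, F w →L[𝕜] E) (R : ∀ w, E →L[𝕜] F w) (Y : ∀ w, F w →L[𝕜] F w) :
    E →L[𝕜] E :=
  ∑ w, L w ∘L Y w ∘L R w

variable {L : ∀ w, F w →L[𝕜] E} {R : ∀ w, E →L[𝕜] F w}
  {P : E →L[𝕜] E} {Pw : ∀ w, F w →L[𝕜] F w}

theorem glue_sub (Y X : ∀ w, F w →L[𝕜] F w) :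
    glue L R (Y - X) = glue L R Y - glue L R X := by
  simp only [glue, Pi.sub_apply, sub_comp, comp_sub, Finset.sum_sub_distrib]

theorem glue_smul (c : 𝕜) (Y : ∀ w, F w →L[𝕜] F w) :
    glue L R (c • Y) = c • glue L R Y := by
  simp only [glue, Pi.smul_apply, smul_comp, comp_smul, Finset.smul_sum]

theorem comp_glue (hL : ∀ w, P ∘L L w = L w ∘L Pw w) (Y : ∀ w, F w →L[𝕜] F w) :
    P ∘L glue L R Y = glue L R (fun w => Pw w ∘L Y w) := by
  simp only [glue, comp_finsetSum, ← comp_assoc, hL]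

theorem glue_comp (hR : ∀ w, R w ∘L P = Pw w ∘L R w) (Y : ∀ w, F w →L[𝕜] F w) :
    glue L R Y ∘L P = glue L R (fun w => Y w ∘L Pw w) := by
  simp only [glue, finsetSum_comp, comp_assoc, hR]

theorem glue_comp_comp_glue (hdiag : ∀ w, R w ∘L P ∘L L w = Pw w)
    (hoff : ∀ w w', w' ≠ w → R w' ∘L P ∘L L w = 0) (Y X : ∀ w, F w →L[𝕜] F w) :
    glue L R Y ∘L P ∘L glue L R X = glue L R (fun w => Y w ∘L Pw w ∘L X w) := by
  simp only [glue, comp_finsetSum, finsetSum_comp]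
  refine Finset.sum_congr rfl fun w _ => ?_
  have hsplit : ∀ w', (L w' ∘L Y w' ∘L R w') ∘L P ∘L L w ∘L X w ∘L R w =
      L w' ∘L Y w' ∘L (R w' ∘L P ∘L L w) ∘L X w ∘L R w := fun _ => rfl
  simp only [hsplit]
  rw [Finset.sum_eq_single_of_mem w (Finset.mem_univ w) fun w' _ hne => by simp [hoff w w' hne],
    hdiag]
  rfl

end ContinuousLinearMap

theorem stmt2
    {U : Type*} [NormedAddCommGroup U] [InnerProductSpace ℂ U]
    {W : Type*} [Fintype W]
    -- orthogonal decomposition U = U₀ ⊕ U₁ via orthogonal projections P₀, P₁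
    (P₁ : U →L[ℂ] U)
    -- the closed subspaces U^w, invariant under P₀ and P₁
    (Uw : W → Submodule ℂ U)
    -- the projections P^w₀, P^w₁ of U^w onto U^w₀, U^w₁ (the restrictions of P₀, P₁)
    (Pw1 : (w : W) → Uw w →L[ℂ] Uw w)
    -- the gluing operators
    (Lw : (w : W) → Uw w →L[ℂ] U) (Rw : (w : W) → U →L[ℂ] Uw w)
    -- gluing hypothesis (1)
    (h1c : ∀ w, P₁ ∘L Lw w = Lw w ∘L Pw1 w) (h1d : ∀ w, Rw w ∘L P₁ = Pw1 w ∘L Rw w)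
    -- gluing hypothesis (2)
    (h2a : ∀ w, Rw w ∘L P₁ ∘L Lw w = Pw1 w)
    (h2b : ∀ w w', w' ≠ w → Rw w' ∘L P₁ ∘L Lw w = 0)
    -- gluing hypothesis (3)
    (h3b : ∑ w, Lw w ∘L Pw1 w ∘L Rw w = P₁)
    -- the operators M^w and the point z
    (Mw : (w : W) → Uw w →L[ℂ] Uw w) (z : ℂ)
    -- for each w, Q^w − z = P^w₁ M^w P^w₁ − z is invertible on U^w₁, with inverse B^w
    (Bw : (w : W) → Uw w →L[ℂ] Uw w)
    (hBw1 : ∀ w, (Pw1 w ∘L Mw w ∘L Pw1 w - z • Pw1 w) ∘L Bw w = Pw1 w)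
    (hBw2 : ∀ w, Bw w ∘L (Pw1 w ∘L Mw w ∘L Pw1 w - z • Pw1 w) = Pw1 w)
    (hBw3 : ∀ w, Pw1 w ∘L Bw w = Bw w) (hBw4 : ∀ w, Bw w ∘L Pw1 w = Bw w)
    -- the glued operator M and the candidate inverse T
    (M T : U →L[ℂ] U)
    (hM : M = ∑ w, Lw w ∘L Mw w ∘L Rw w)
    (hT : T = ∑ w, Lw w ∘L Pw1 w ∘L Bw w ∘L Pw1 w ∘L Rw w) :
    (P₁ ∘L M ∘L P₁ - z • P₁) ∘L T = P₁ ∧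
    T ∘L (P₁ ∘L M ∘L P₁ - z • P₁) = P₁ ∧
    P₁ ∘L T = T ∧ T ∘L P₁ = T := by
  have hP₁ : glue Lw Rw Pw1 = P₁ := h3b
  have hT' : T = glue Lw Rw Bw := by
    have hT_glue : T = glue Lw Rw (fun w => Pw1 w ∘L Bw w ∘L Pw1 w) := hT
    simpa only [hBw4, hBw3] using hT_glue
  have hQ : P₁ ∘L M ∘L P₁ - z • P₁ =
      glue Lw Rw (fun w => Pw1 w ∘L Mw w ∘L Pw1 w - z • Pw1 w) := by
    rw [show M = glue Lw Rw Mw from hM, ← comp_assoc, comp_glue h1c, glue_comp h1d, ← hP₁,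
      ← glue_smul, ← glue_sub]
    rfl
  have hP₁T : P₁ ∘L T = T := by rw [hT', comp_glue h1c]; simp only [hBw3]
  have hTP₁ : T ∘L P₁ = T := by rw [hT', glue_comp h1d]; simp only [hBw4]
  refine ⟨?_, ?_, hP₁T, hTP₁⟩
  · rw [← hP₁T, hQ, hT', glue_comp_comp_glue h2a h2b]
    simp only [hBw3, hBw1, hP₁]
  · rw [← hTP₁, hQ, hT', comp_assoc, glue_comp_comp_glue h2a h2b]
    simp only [← comp_assoc (Bw _), hBw4, hBw2, hP₁]
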